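/- arXiv:1802.04383 — 2 statements merged into one kernel-verified Lean document; each statement's English description precedes it below -/
import Mathlib

section
/- Let h : ℝ → (-∞, +∞] be a function that admits a directional derivative at every point of its domain in every direction (in the sense of one-sided limits with values in (-∞, +∞]). Then h is lower semicontinuous at every point of its domain. -/
open Filter Set

def HasDirDeriv {Ω : Type*} [AddCommGroup Ω] [Module ℝ Ω]
    (h : Ω → EReal) (x d : Ω) (L : EReal) : Prop :=
  Tendsto (fun t : ℝ => ((t⁻¹ : ℝ) : EReal) * (h (x + t • d) - h x))
    (nhdsWithin 0 (Set.Ioi 0)) (nhds L)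

/-!
Lower bound along a ray: if the one-sided directional derivative `L` at `x` in direction `d` is
not `-∞`, pick a real `M < L`; then `h (x + t • d) > h x + t M` for small `t > 0`, and the right-hand
side tends to `h x`. Applying this with `d = 1` and `d = -1` bounds `h` from below near `x` on both
sides, which is lower semicontinuity on `ℝ`.
-/

open Topology

theorem HasDirDeriv.eventually_lt_apply_add_smul {Ω : Type*} [AddCommGroup Ω] [Module ℝ Ω]
    {h : Ω → EReal} {x d : Ω} {L : EReal} (hd : HasDirDeriv h x d L) (hL : L ≠ ⊥)
    (hx : h x ≠ ⊤) {y : EReal} (hy : y < h x) :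
    ∀ᶠ t in 𝓝[>] (0 : ℝ), y < h (x + t • d) := by
  lift h x to ℝ using ⟨hx, (bot_le.trans_lt hy).ne'⟩ with a ha
  obtain ⟨b, hyb, hba⟩ := EReal.lt_iff_exists_real_btwn.1 hy
  obtain ⟨M, -, hML⟩ := EReal.lt_iff_exists_real_btwn.1 hL.bot_lt
  rw [HasDirDeriv, ← ha] at hd
  have hquot : ∀ᶠ t in 𝓝[>] (0 : ℝ), (M : EReal) < ((t⁻¹ : ℝ) : EReal) * (h (x + t • d) - a) :=
    hd.eventually (lt_mem_nhds hML)
  have hlin : ∀ᶠ t in 𝓝[>] (0 : ℝ), b < M * t + a := by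
    have : Tendsto (fun t : ℝ => M * t + a) (𝓝 0) (𝓝 a) :=
      (by fun_prop : Continuous fun t : ℝ => M * t + a).tendsto' 0 a (by simp)
    exact (this.mono_left nhdsWithin_le_nhds).eventually (lt_mem_nhds (by exact_mod_cast hba))
  filter_upwards [hquot, hlin, self_mem_nhdsWithin] with t hMt hbt (ht : 0 < t)
  have htE : (0 : EReal) < t := by exact_mod_cast ht
  rw [mul_comm, EReal.coe_inv, ← div_eq_mul_inv, EReal.lt_div_iff htE (EReal.coe_ne_top t),
    EReal.lt_sub_iff_add_lt (.inl (EReal.coe_ne_bot a)) (.inl (EReal.coe_ne_top a))] at hMt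
  calc y < b := hyb
    _ < M * t + a := by exact_mod_cast hbt
    _ < h (x + t • d) := hMt

theorem lowerSemicontinuousAt_of_eventually_lt_right_left {β : Type*} [Preorder β]
    {f : ℝ → β} {x : ℝ} (hright : ∀ y < f x, ∀ᶠ t in 𝓝[>] (0 : ℝ), y < f (x + t))
    (hleft : ∀ y < f x, ∀ᶠ t in 𝓝[>] (0 : ℝ), y < f (x - t)) :
    LowerSemicontinuousAt f x := by
  intro y hy
  rw [← nhdsNE_sup_pure, ← nhdsLT_sup_nhdsGT, eventually_sup, eventually_sup, eventually_pure]
  refine ⟨⟨?_, ?_⟩, hy⟩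
  · have hmap := map_subLeft_nhdsGT (c := x) (a := 0)
    rw [sub_zero] at hmap
    rw [← hmap, eventually_map]
    exact hleft y hy
  · have hmap := map_add_left_nhdsGT (c := x) (a := 0)
    rw [add_zero] at hmap
    rw [← hmap, eventually_map]
    exact hright y hy

theorem stmt_2_general (h : ℝ → EReal)
    (hdd : ∀ x, h x ≠ ⊤ → ∀ d : ℝ, ∃ L : EReal, L ≠ ⊥ ∧ HasDirDeriv h x d L) :
    ∀ x, h x ≠ ⊤ → LowerSemicontinuousAt h x := by
  intro x hx
  obtain ⟨Lr, hLr, hdr⟩ := hdd x hx 1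
  obtain ⟨Ll, hLl, hdl⟩ := hdd x hx (-1)
  refine lowerSemicontinuousAt_of_eventually_lt_right_left (fun y hy => ?_) (fun y hy => ?_)
  · simpa using hdr.eventually_lt_apply_add_smul hLr hx hy
  · simpa [← sub_eq_add_neg] using hdl.eventually_lt_apply_add_smul hLl hx hy

theorem stmt_2 (h : ℝ → EReal) (hbot : ∀ y, h y ≠ ⊥)
    (hdd : ∀ x, h x ≠ ⊤ → ∀ d : ℝ, ∃ L : EReal, L ≠ ⊥ ∧ HasDirDeriv h x d L) :
    ∀ x, h x ≠ ⊤ → LowerSemicontinuousAt h x :=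
  stmt_2_general h hdd
end

section
/- Let G = (V, E, w) be a finite weighted graph with w : E → ℝ₊, f : ℝ^V → ℝ differentiable, and for each v ∈ V let g_v : ℝ → (-∞, +∞] be directionally differentiable. Define F(x) = f(x) + Σ_v g_v(x_v) + Σ_{(u,v)∈E} w_{(u,v)}|x_u − x_v|. Then for every x ∈ dom F and d ∈ ℝ^V, F admits a directional derivative at x in direction d, equal to Σ_{v: d_v>0} δ⁺_v(x)·d_v + Σ_{v: d_v<0} δ⁻_v(x)·d_v + Σ_{(u,v)∈E, x_u=x_v} w_{(u,v)}|d_u − d_v|, where δ⁺_v(x) = ∇_v f(x) + g_v'(x_v, +1) + Σ_{e=(u,v) or (v,u) ∈ E} w_e·sign(x_v − x_u) and δ⁻_v(x) = ∇_v f(x) − g_v'(x_v, −1) + Σ_{e=(u,v) or (v,u) ∈ E} w_e·sign(x_v − x_u). -/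
open Filter Set Finset

variable {V : Type*} [Fintype V] [DecidableEq V]

/-- The objective `F = f + Σ_v g_v + graph total variation`. -/
noncomputable def objF (E : Finset (V × V)) (w : V × V → ℝ)
    (f : (V → ℝ) → ℝ) (g : V → ℝ → EReal) (x : V → ℝ) : EReal :=
  ((f x : ℝ) : EReal) + ∑ v, g v (x v) +
    ((∑ e ∈ E, w e * |x e.1 - x e.2| : ℝ) : EReal)

/-- `δ⁺_v(x) = ∇_v f(x) + g_v'(x_v, +1) + Σ_{e ∋ v} w_e sign(x_v − x_u)`. -/
noncomputable def deltaPlus (E : Finset (V × V)) (w : V × V → ℝ)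
    (f : (V → ℝ) → ℝ) (gd : V → ℝ → ℝ → EReal) (x : V → ℝ) (v : V) : EReal :=
  ((fderiv ℝ f x (Pi.single v 1) : ℝ) : EReal) + gd v (x v) 1 +
    ((∑ e ∈ E.filter (fun e => e.1 = v ∨ e.2 = v),
        w e * Real.sign (x v - x (if e.1 = v then e.2 else e.1)) : ℝ) : EReal)

/-- `δ⁻_v(x) = ∇_v f(x) − g_v'(x_v, −1) + Σ_{e ∋ v} w_e sign(x_v − x_u)`. -/
noncomputable def deltaMinus (E : Finset (V × V)) (w : V × V → ℝ)
    (f : (V → ℝ) → ℝ) (gd : V → ℝ → ℝ → EReal) (x : V → ℝ) (v : V) : EReal :=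
  ((fderiv ℝ f x (Pi.single v 1) : ℝ) : EReal) - gd v (x v) (-1) +
    ((∑ e ∈ E.filter (fun e => e.1 = v ∨ e.2 = v),
        w e * Real.sign (x v - x (if e.1 = v then e.2 else e.1)) : ℝ) : EReal)

/-- The value of the directional derivative of `F` at `x` in direction `d`. -/
noncomputable def dirDerivVal (E : Finset (V × V)) (w : V × V → ℝ)
    (f : (V → ℝ) → ℝ) (gd : V → ℝ → ℝ → EReal) (x d : V → ℝ) : EReal :=
  (∑ v ∈ univ.filter (fun v => 0 < d v),
      ((d v : ℝ) : EReal) * deltaPlus E w f gd x v) +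
  (∑ v ∈ univ.filter (fun v => d v < 0),
      ((d v : ℝ) : EReal) * deltaMinus E w f gd x v) +
  ((∑ e ∈ E.filter (fun e => x e.1 = x e.2), w e * |d e.1 - d e.2| : ℝ) : EReal)

/-!
For `t > 0` the difference quotient of `F` splits, exactly in `(-∞, +∞]`, into the quotients of
`f`, of each `g_v` and of the total-variation term: as no `g_v` takes the value `-∞`, finiteness
of `F(x)` makes every `g_v(x_v)` finite. The first tends to `∇f(x)·d`; by positive homogeneity in the direction, the quotient of
`g_v` tends to `d_v g_v'(x_v; 1)` or `|d_v| g_v'(x_v; -1)`; the quotient of `|x_u - x_v|` tends to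
`sign(x_u - x_v) (d_u - d_v)`, or to `|d_u - d_v|` when `x_u = x_v`. No limit is `-∞`, so they add.
Regrouping the linear edge terms by vertex gives the `sign` sums inside `δ±`.
-/

open scoped Topology

namespace EReal

lemma coe_finset_sum {ι : Type*} (s : Finset ι) (r : ι → ℝ) :
    ((∑ i ∈ s, r i : ℝ) : EReal) = ∑ i ∈ s, (r i : EReal) :=
  map_sum (⟨⟨(↑), coe_zero⟩, coe_add⟩ : ℝ →+ EReal) r s

lemma sum_ne_bot {ι : Type*} {s : Finset ι} {f : ι → EReal} (h : ∀ i ∈ s, f i ≠ ⊥) :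
    ∑ i ∈ s, f i ≠ ⊥ :=
  Finset.sum_induction f (· ≠ ⊥) (fun _ _ ha hb => add_ne_bot_iff.2 ⟨ha, hb⟩) zero_ne_bot h

lemma sum_ne_top {ι : Type*} {s : Finset ι} {f : ι → EReal} (h : ∀ i ∈ s, f i ≠ ⊤) :
    ∑ i ∈ s, f i ≠ ⊤ :=
  Finset.sum_induction f (· ≠ ⊤) (fun _ _ => add_ne_top) zero_ne_top h

lemma sum_eq_top_of_mem {ι : Type*} [DecidableEq ι] {s : Finset ι} {f : ι → EReal}
    (h : ∀ i ∈ s, f i ≠ ⊥) {i : ι} (hi : i ∈ s) (htop : f i = ⊤) : ∑ i ∈ s, f i = ⊤ := by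
  rw [← Finset.add_sum_erase s f hi, htop]
  exact top_add_of_ne_bot (sum_ne_bot fun j hj => h j (mem_of_mem_erase hj))

lemma coe_mul_ne_bot_of_pos {c : ℝ} (hc : 0 < c) {a : EReal} (ha : a ≠ ⊥) :
    (c : EReal) * a ≠ ⊥ :=
  (mul_ne_bot _ _).2
    ⟨Or.inl (coe_ne_bot c), Or.inr ha, Or.inl (coe_ne_top c), Or.inl (by exact_mod_cast hc.le)⟩

end EReal

section DirDeriv

variable {Ω : Type*} [AddCommGroup Ω] [Module ℝ Ω] {x d : Ω}

lemma hasDirDeriv_coe {φ : Ω → ℝ} {L : ℝ}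
    (hφ : Tendsto (fun t : ℝ => t⁻¹ * (φ (x + t • d) - φ x)) (𝓝[>] 0) (𝓝 L)) :
    HasDirDeriv (fun y => (φ y : EReal)) x d L :=
  (EReal.tendsto_coe.2 hφ).congr fun t => by rw [EReal.coe_mul, EReal.coe_sub]

lemma hasDirDeriv_zero {h : Ω → EReal} (hx : h x ≠ ⊤) (hx' : h x ≠ ⊥) :
    HasDirDeriv h x 0 0 := by
  simp only [HasDirDeriv, smul_zero, add_zero, EReal.sub_self hx hx', mul_zero]
  exact tendsto_const_nhds

lemma HasDirDeriv.smul {h : Ω → EReal} {L : EReal} (hL : HasDirDeriv h x d L) {c : ℝ}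
    (hc : 0 < c) : HasDirDeriv h x (c • d) (c * L) := by
  have hscale : Tendsto (fun t : ℝ => c * t) (𝓝[>] 0) (𝓝[>] 0) :=
    tendsto_iff_comap.2 (comap_mulLeft_nhdsGT_zero hc).ge
  refine ((EReal.Tendsto.const_mul (hL.comp hscale) (Or.inl (EReal.coe_ne_bot c))
    (Or.inl (EReal.coe_ne_top c))).congr fun t => ?_)
  simp only [Function.comp_apply, smul_smul, mul_comm t c, ← mul_assoc, ← EReal.coe_mul]
  congr 2
  field_simp

lemma HasDirDeriv.add {h₁ h₂ : Ω → EReal} {L₁ L₂ : EReal} (hd₁ : HasDirDeriv h₁ x d L₁)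
    (hd₂ : HasDirDeriv h₂ x d L₂) (hx₁ : h₁ x ≠ ⊤) (hx₁' : h₁ x ≠ ⊥) (hx₂ : h₂ x ≠ ⊤)
    (hx₂' : h₂ x ≠ ⊥) (hL₁ : L₁ ≠ ⊥) (hL₂ : L₂ ≠ ⊥) :
    HasDirDeriv (fun y => h₁ y + h₂ y) x d (L₁ + L₂) := by
  refine ((EReal.continuousAt_add (Or.inr hL₂) (Or.inl hL₁)).tendsto.comp
    (hd₁.prodMk_nhds hd₂)).congr' ?_
  filter_upwards [self_mem_nhdsWithin] with t ht
  lift h₁ x to ℝ using ⟨hx₁, hx₁'⟩ with a ha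
  lift h₂ x to ℝ using ⟨hx₂, hx₂'⟩ with b hb
  have hsplit : h₁ (x + t • d) + h₂ (x + t • d) - ((a : EReal) + b) =
      (h₁ (x + t • d) - a) + (h₂ (x + t • d) - b) := by
    simp only [sub_eq_add_neg]
    rw [← EReal.coe_add, ← EReal.coe_neg, neg_add, EReal.coe_add, EReal.coe_neg, EReal.coe_neg]
    ac_rfl
  rw [Function.comp_apply, hsplit, EReal.left_distrib_of_nonneg_of_ne_top
    (by exact_mod_cast (inv_pos.2 ht).le) (EReal.coe_ne_top _)]

lemma HasDirDeriv.sum {ι : Type*} {s : Finset ι} {h : ι → Ω → EReal} {L : ι → EReal}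
    (hd : ∀ i ∈ s, HasDirDeriv (h i) x d (L i)) (hx : ∀ i ∈ s, h i x ≠ ⊤)
    (hx' : ∀ i ∈ s, h i x ≠ ⊥) (hL : ∀ i ∈ s, L i ≠ ⊥) :
    HasDirDeriv (fun y => ∑ i ∈ s, h i y) x d (∑ i ∈ s, L i) := by
  induction s using Finset.cons_induction with
  | empty => simp [HasDirDeriv]
  | cons a s ha ih =>
    simp only [sum_cons, forall_mem_cons] at hd hx hx' hL ⊢
    exact hd.1.add (ih hd.2 hx.2 hx'.2 hL.2) hx.1 hx'.1 (EReal.sum_ne_top hx.2)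
      (EReal.sum_ne_bot hx'.2) hL.1 (EReal.sum_ne_bot hL.2)

lemma HasDirDeriv.comp_eval {ι : Type*} {h : ℝ → EReal} {x d : ι → ℝ} {L : EReal} (i : ι)
    (hd : HasDirDeriv h (x i) (d i) L) : HasDirDeriv (fun y => h (y i)) x d L :=
  hd

end DirDeriv

/-- The positively homogeneous extension `δ ↦ h'(y; δ)` of the one-sided derivatives
`Lp = h'(y; 1)` and `Lm = h'(y; -1)`. -/
noncomputable def dirDerivOfOneSided (Lp Lm : EReal) (δ : ℝ) : EReal :=
  if 0 < δ then (δ : EReal) * Lp else if δ < 0 then ((-δ : ℝ) : EReal) * Lm else 0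

lemma dirDerivOfOneSided_ne_bot {Lp Lm : EReal} (hp : Lp ≠ ⊥) (hm : Lm ≠ ⊥) (δ : ℝ) :
    dirDerivOfOneSided Lp Lm δ ≠ ⊥ := by
  unfold dirDerivOfOneSided
  split_ifs with hpos hneg
  · exact EReal.coe_mul_ne_bot_of_pos hpos hp
  · exact EReal.coe_mul_ne_bot_of_pos (neg_pos.2 hneg) hm
  · exact EReal.zero_ne_bot

lemma HasDirDeriv.of_one_sided {h : ℝ → EReal} {y : ℝ} {Lp Lm : EReal} (hy : h y ≠ ⊤)
    (hy' : h y ≠ ⊥) (hp : HasDirDeriv h y 1 Lp) (hm : HasDirDeriv h y (-1) Lm) (δ : ℝ) :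
    HasDirDeriv h y δ (dirDerivOfOneSided Lp Lm δ) := by
  unfold dirDerivOfOneSided
  split_ifs with hpos hneg
  · simpa using hp.smul hpos
  · simpa using hm.smul (neg_pos.2 hneg)
  · obtain rfl : δ = 0 := by linarith
    exact hasDirDeriv_zero hy hy'

noncomputable def absDirDeriv (y δ : ℝ) : ℝ :=
  if y = 0 then |δ| else Real.sign y * δ

lemma tendsto_abs_slope_right (y δ : ℝ) :
    Tendsto (fun t : ℝ => t⁻¹ * (|y + t * δ| - |y|)) (𝓝[>] 0) (𝓝 (absDirDeriv y δ)) := by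
  unfold absDirDeriv
  split_ifs with hy
  · subst hy
    refine tendsto_const_nhds.congr' ?_
    filter_upwards [self_mem_nhdsWithin] with t (ht : 0 < t)
    rw [zero_add, abs_zero, sub_zero, abs_mul, abs_of_pos ht, inv_mul_cancel_left₀ ht.ne']
  · have hline : HasDerivAt (fun t : ℝ => y + t * δ) δ 0 := by
      simpa using ((hasDerivAt_id (0 : ℝ)).mul_const δ).const_add y
    have habs : HasDerivAt (|·|) (Real.sign y) (y + 0 * δ) := by
      rw [zero_mul, add_zero]
      rcases lt_or_gt_of_ne hy with hneg | hpos
      · simpa [Real.sign_of_neg hneg] using hasDerivAt_abs_neg hneg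
      · simpa [Real.sign_of_pos hpos] using hasDerivAt_abs_pos hpos
    simpa using (habs.comp 0 hline).tendsto_slope_zero_right

omit [Fintype V] [DecidableEq V] in
lemma tendsto_slope_graphTV (E : Finset (V × V)) (w : V × V → ℝ) (x d : V → ℝ) :
    Tendsto (fun t : ℝ => t⁻¹ * (∑ e ∈ E, w e * |(x + t • d) e.1 - (x + t • d) e.2| -
        ∑ e ∈ E, w e * |x e.1 - x e.2|)) (𝓝[>] 0)
      (𝓝 (∑ e ∈ E, w e * absDirDeriv (x e.1 - x e.2) (d e.1 - d e.2))) := by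
  refine (tendsto_finsetSum E fun e _ =>
    (tendsto_abs_slope_right (x e.1 - x e.2) (d e.1 - d e.2)).const_mul (w e)).congr fun t => ?_
  rw [← sum_sub_distrib, mul_sum]
  refine sum_congr rfl fun e _ => ?_
  simp only [Pi.add_apply, Pi.smul_apply, smul_eq_mul]
  rw [show x e.1 + t * d e.1 - (x e.2 + t * d e.2) = x e.1 - x e.2 + t * (d e.1 - d e.2) by ring]
  ring

omit [DecidableEq V] in
lemma hasDirDeriv_objF (E : Finset (V × V)) (w : V × V → ℝ) {f : (V → ℝ) → ℝ}
    {g : V → ℝ → EReal} {x : V → ℝ} (d : V → ℝ) {Lp Lm : V → EReal}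
    (hf : DifferentiableAt ℝ f x) (hgx : ∀ v, g v (x v) ≠ ⊤) (hgx' : ∀ v, g v (x v) ≠ ⊥)
    (hp : ∀ v, HasDirDeriv (g v) (x v) 1 (Lp v)) (hm : ∀ v, HasDirDeriv (g v) (x v) (-1) (Lm v))
    (hLp : ∀ v, Lp v ≠ ⊥) (hLm : ∀ v, Lm v ≠ ⊥) :
    HasDirDeriv (objF E w f g) x d
      ((fderiv ℝ f x d : EReal) + ∑ v, dirDerivOfOneSided (Lp v) (Lm v) (d v) +
        ((∑ e ∈ E, w e * absDirDeriv (x e.1 - x e.2) (d e.1 - d e.2) : ℝ) : EReal)) := by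
  have hsmooth : HasDirDeriv (fun y => (f y : EReal)) x d (fderiv ℝ f x d) :=
    hasDirDeriv_coe (by simpa using (hf.hasFDerivAt.hasLineDerivAt d).tendsto_slope_zero_right)
  have hlim_ne_bot : ∀ v, dirDerivOfOneSided (Lp v) (Lm v) (d v) ≠ ⊥ :=
    fun v => dirDerivOfOneSided_ne_bot (hLp v) (hLm v) (d v)
  have hsep : HasDirDeriv (fun y => ∑ v, g v (y v)) x d
      (∑ v, dirDerivOfOneSided (Lp v) (Lm v) (d v)) :=
    HasDirDeriv.sum (fun v _ => ((hp v).of_one_sided (hgx v) (hgx' v) (hm v) (d v)).comp_eval v)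
      (fun v _ => hgx v) (fun v _ => hgx' v) (fun v _ => hlim_ne_bot v)
  have hsep_ne_top : ∑ v, g v (x v) ≠ ⊤ := EReal.sum_ne_top fun v _ => hgx v
  have hsep_ne_bot : ∑ v, g v (x v) ≠ ⊥ := EReal.sum_ne_bot fun v _ => hgx' v
  have hsep_lim_ne_bot := EReal.sum_ne_bot fun v (_ : v ∈ Finset.univ) => hlim_ne_bot v
  have htv : HasDirDeriv (fun y => ((∑ e ∈ E, w e * |y e.1 - y e.2| : ℝ) : EReal)) x d
      ((∑ e ∈ E, w e * absDirDeriv (x e.1 - x e.2) (d e.1 - d e.2) : ℝ) : EReal) :=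
    hasDirDeriv_coe (tendsto_slope_graphTV E w x d)
  exact (hsmooth.add hsep (EReal.coe_ne_top _) (EReal.coe_ne_bot _) hsep_ne_top hsep_ne_bot
      (EReal.coe_ne_bot _) hsep_lim_ne_bot).add htv
    (EReal.add_ne_top (EReal.coe_ne_top _) hsep_ne_top)
    (EReal.add_ne_bot_iff.2 ⟨EReal.coe_ne_bot _, hsep_ne_bot⟩) (EReal.coe_ne_top _)
    (EReal.coe_ne_bot _) (EReal.add_ne_bot_iff.2 ⟨EReal.coe_ne_bot _, hsep_lim_ne_bot⟩)
    (EReal.coe_ne_bot _)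

lemma Finset.sum_filter_pos_add_sum_filter_neg {ι M : Type*} [Fintype ι] [AddCommMonoid M]
    (δ : ι → ℝ) (a b : ι → M) :
    ∑ i ∈ univ.filter (fun i => 0 < δ i), a i + ∑ i ∈ univ.filter (fun i => δ i < 0), b i =
      ∑ i, if 0 < δ i then a i else if δ i < 0 then b i else 0 := by
  rw [sum_ite, sum_ite, sum_const_zero, add_zero, filter_filter]
  congr 2
  ext i
  simp only [mem_filter, mem_univ, true_and]
  exact ⟨fun h => ⟨lt_asymm h, h⟩, And.right⟩

lemma ite_mul_eq_coe_add_dirDerivOfOneSided (δ a c : ℝ) {Lp Lm : EReal} (hp : Lp ≠ ⊥)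
    (hm : Lm ≠ ⊥) :
    (if 0 < δ then (δ : EReal) * ((a : EReal) + Lp + c)
      else if δ < 0 then (δ : EReal) * ((a : EReal) - Lm + c) else 0) =
      ((δ * (a + c) : ℝ) : EReal) + dirDerivOfOneSided Lp Lm δ := by
  unfold dirDerivOfOneSided
  split_ifs with hpos hneg
  · induction Lp with
    | bot => exact absurd rfl hp
    | coe r => norm_cast; ring
    | top =>
      rw [EReal.add_top_of_ne_bot (EReal.coe_ne_bot a), EReal.top_add_of_ne_bot (EReal.coe_ne_bot c),
        EReal.mul_top_of_pos (EReal.coe_pos.2 hpos), EReal.add_top_of_ne_bot (EReal.coe_ne_bot _)]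
  · induction Lm with
    | bot => exact absurd rfl hm
    | coe r => norm_cast; ring
    | top =>
      rw [EReal.mul_top_of_pos (EReal.coe_pos.2 (neg_pos.2 hneg)),
        EReal.add_top_of_ne_bot (EReal.coe_ne_bot _)]
      simp [EReal.mul_bot_of_neg (EReal.coe_neg'.2 hneg)]
  · obtain rfl : δ = 0 := by linarith
    simp

lemma sum_mul_sum_incident_sign (E : Finset (V × V)) (w : V × V → ℝ) (x d : V → ℝ) :
    ∑ v, d v * ∑ e ∈ E.filter (fun e => e.1 = v ∨ e.2 = v),
        w e * Real.sign (x v - x (if e.1 = v then e.2 else e.1)) =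
      ∑ e ∈ E, w e * Real.sign (x e.1 - x e.2) * (d e.1 - d e.2) := by
  simp_rw [mul_sum]
  rw [Finset.sum_comm' (t' := E) (s' := fun e => {e.1, e.2})]
  · refine sum_congr rfl fun e _ => ?_
    by_cases hloop : e.1 = e.2
    · simp [hloop]
    · rw [sum_pair hloop, if_pos rfl, if_neg hloop, ← neg_sub (x e.1), Real.sign_neg]
      ring
  · intro v e
    simp [eq_comm, and_comm]

omit [Fintype V] [DecidableEq V] in
lemma sum_mul_absDirDeriv_eq (E : Finset (V × V)) (w : V × V → ℝ) (x d : V → ℝ) :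
    ∑ e ∈ E, w e * absDirDeriv (x e.1 - x e.2) (d e.1 - d e.2) =
      ∑ e ∈ E, w e * Real.sign (x e.1 - x e.2) * (d e.1 - d e.2) +
        ∑ e ∈ E.filter (fun e => x e.1 = x e.2), w e * |d e.1 - d e.2| := by
  rw [sum_filter, ← sum_add_distrib]
  refine sum_congr rfl fun e _ => ?_
  by_cases h : x e.1 = x e.2
  · simp [absDirDeriv, h]
  · simp only [absDirDeriv, sub_eq_zero, if_neg h, add_zero]
    ring

lemma dirDerivVal_eq (E : Finset (V × V)) (w : V × V → ℝ) (f : (V → ℝ) → ℝ)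
    (gd : V → ℝ → ℝ → EReal) (x d : V → ℝ) (hp : ∀ v, gd v (x v) 1 ≠ ⊥)
    (hm : ∀ v, gd v (x v) (-1) ≠ ⊥) :
    dirDerivVal E w f gd x d =
      (fderiv ℝ f x d : EReal) + ∑ v, dirDerivOfOneSided (gd v (x v) 1) (gd v (x v) (-1)) (d v) +
        ((∑ e ∈ E, w e * absDirDeriv (x e.1 - x e.2) (d e.1 - d e.2) : ℝ) : EReal) := by
  set A : V → ℝ := fun v => fderiv ℝ f x (Pi.single v 1)
  set C : V → ℝ := fun v => ∑ e ∈ E.filter (fun e => e.1 = v ∨ e.2 = v),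
    w e * Real.sign (x v - x (if e.1 = v then e.2 else e.1))
  have hvertex : ∀ v, (if 0 < d v then (d v : EReal) * deltaPlus E w f gd x v
      else if d v < 0 then (d v : EReal) * deltaMinus E w f gd x v else 0) =
      ((d v * (A v + C v) : ℝ) : EReal) +
        dirDerivOfOneSided (gd v (x v) 1) (gd v (x v) (-1)) (d v) :=
    fun v => ite_mul_eq_coe_add_dirDerivOfOneSided (d v) (A v) (C v) (hp v) (hm v)
  have hgrad : fderiv ℝ f x d = ∑ v, d v * A v := by
    conv_lhs => rw [pi_eq_sum_univ' d, map_sum]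
    simp only [map_smul, smul_eq_mul, A]
  have hlin : ∑ v, d v * (A v + C v) =
      fderiv ℝ f x d + ∑ e ∈ E, w e * Real.sign (x e.1 - x e.2) * (d e.1 - d e.2) := by
    rw [hgrad, ← sum_mul_sum_incident_sign E w x d, ← sum_add_distrib]
    simp only [mul_add, C]
  rw [dirDerivVal, sum_filter_pos_add_sum_filter_neg, sum_congr rfl fun v _ => hvertex v,
    sum_add_distrib, ← EReal.coe_finset_sum, hlin, sum_mul_absDirDeriv_eq]
  simp only [EReal.coe_add]
  ac_rfl

theorem stmt_8_general (E : Finset (V × V)) (w : V × V → ℝ)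
    (f : (V → ℝ) → ℝ) (hf : Differentiable ℝ f)
    (g : V → ℝ → EReal) (hgbot : ∀ v y, g v y ≠ ⊥)
    (gd : V → ℝ → ℝ → EReal)
    (hgd : ∀ v y, g v y ≠ ⊤ → ∀ dir : ℝ,
      HasDirDeriv (g v) y dir (gd v y dir) ∧ gd v y dir ≠ ⊥)
    (x : V → ℝ) (hx : objF E w f g x ≠ ⊤) (d : V → ℝ) :
    HasDirDeriv (objF E w f g) x d (dirDerivVal E w f gd x d) := by
  have hgx : ∀ v, g v (x v) ≠ ⊤ := fun v htop => hx <| by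
    rw [objF, EReal.sum_eq_top_of_mem (fun u _ => hgbot u _) (mem_univ v) htop,
      EReal.add_top_of_ne_bot (EReal.coe_ne_bot _), EReal.top_add_of_ne_bot (EReal.coe_ne_bot _)]
  have hplus := fun v => hgd v (x v) (hgx v) 1
  have hminus := fun v => hgd v (x v) (hgx v) (-1)
  rw [dirDerivVal_eq E w f gd x d (fun v => (hplus v).2) (fun v => (hminus v).2)]
  exact hasDirDeriv_objF E w d (hf x) hgx (fun v => hgbot v _) (fun v => (hplus v).1)
    (fun v => (hminus v).1) (fun v => (hplus v).2) (fun v => (hminus v).2)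

theorem stmt_8 (E : Finset (V × V)) (w : V × V → ℝ) (hw : ∀ e ∈ E, 0 ≤ w e)
    (f : (V → ℝ) → ℝ) (hf : Differentiable ℝ f)
    (g : V → ℝ → EReal) (hgbot : ∀ v y, g v y ≠ ⊥)
    (gd : V → ℝ → ℝ → EReal)
    (hgd : ∀ v y, g v y ≠ ⊤ → ∀ dir : ℝ,
      HasDirDeriv (g v) y dir (gd v y dir) ∧ gd v y dir ≠ ⊥)
    (x : V → ℝ) (hx : objF E w f g x ≠ ⊤) (d : V → ℝ) :
    HasDirDeriv (objF E w f g) x d (dirDerivVal E w f gd x d) :=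
  stmt_8_general E w f hf g hgbot gd hgd x hx d
end
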